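/- arXiv:2202.08328 — 2 statements merged into one kernel-verified Lean document; each statement's English description precedes it below -/
import Mathlib

section
/- In the idempotent semifield quotient of the previous construction: for an idempotent semifield S, in the semiring ℕ[S∖{0}] modulo the preorder generated by the relations 1·b ≤ Σ 1·aᵢ (whenever Σaᵢ = b + Σ_{i≠k}aᵢ in S for all k) together with 1 ≡ 1+1, one has [Σᵢ mᵢ·sᵢ] = [Σᵢ 1·sᵢ] for all positive integers mᵢ and elements sᵢ ∈ S, and moreover [1·a] + [1·b] = [1·(a+b)] for all a, b ∈ S. -/
noncomputable section

open MonoidAlgebra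

/-- The generating relations on `ℕ[S]` (the monoid semiring of the multiplicative
monoid of `S`): the identification `1·0_S ≡ 0` (turning `ℕ[S]` into the
semiring-algebra `ℕ[S∖{0}]`), the relations `1·b ≤ Σᵢ 1·aᵢ` whenever
`Σᵢ aᵢ = b + Σ_{i≠k} aᵢ` holds in `S` for every `k`, and `1 ≡ 1 + 1`. -/
inductive smonGen (S : Type*) [CommSemiring S] :
    MonoidAlgebra ℕ S → MonoidAlgebra ℕ S → Prop
  | zero_le : smonGen S (MonoidAlgebra.single (0 : S) 1) 0
  | le_zero : smonGen S 0 (MonoidAlgebra.single (0 : S) 1)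
  | rel (m : ℕ) (a : Fin m → S) (b : S)
      (h : ∀ k : Fin m, ∑ i, a i = b + ∑ i ∈ Finset.univ.erase k, a i) :
      smonGen S (MonoidAlgebra.single b 1) (∑ i, MonoidAlgebra.single (a i) 1)
  | idem_le : smonGen S 1 (1 + 1)
  | le_idem : smonGen S (1 + 1) 1

/-- An additive and multiplicative preorder on a semiring. -/
def IsAMPreorder {R : Type*} [Semiring R] (p : R → R → Prop) : Prop :=
  Reflexive p ∧ Transitive p ∧ (∀ a b z : R, p a b → p (a + z) (b + z)) ∧
    (∀ a b z : R, p a b → p (a * z) (b * z))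

/-- The smallest additive and multiplicative preorder on `ℕ[S]` containing the
generating relations `smonGen`. -/
def smonLe (S : Type*) [CommSemiring S] :
    MonoidAlgebra ℕ S → MonoidAlgebra ℕ S → Prop := fun a b =>
  ∀ p : MonoidAlgebra ℕ S → MonoidAlgebra ℕ S → Prop,
    IsAMPreorder p → (∀ x y, smonGen S x y → p x y) → p a b

/-- The congruence induced by the preorder `smonLe`. -/
def smonC (S : Type*) [CommSemiring S] :
    MonoidAlgebra ℕ S → MonoidAlgebra ℕ S → Prop := fun a b =>
  smonLe S a b ∧ smonLe S b a

/-!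
Multiplying `1 ≡ 1 + 1` by `z` gives `z + z ≡ z`, which absorbs every multiplicity. For the
sum, the generating relation with the two summands `a, b` gives `1·(a + b) ≤ 1·a + 1·b`.
Conversely, since `a + (a + b) = a + b` in an idempotent semiring, the relation with the two
summands `a + b, a + b` gives `1·a ≤ 1·(a + b) + 1·(a + b) ≡ 1·(a + b)`, and likewise for `b`.
-/

namespace smonLe

variable {S : Type*} [CommSemiring S] {a b c d : MonoidAlgebra ℕ S}

lemma refl (a : MonoidAlgebra ℕ S) : smonLe S a a := fun _ hp _ => hp.1 a

lemma trans (h₁ : smonLe S a b) (h₂ : smonLe S b c) : smonLe S a c :=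
  fun p hp hg => hp.2.1 (h₁ p hp hg) (h₂ p hp hg)

lemma add_right (z : MonoidAlgebra ℕ S) (h : smonLe S a b) : smonLe S (a + z) (b + z) :=
  fun p hp hg => hp.2.2.1 a b z (h p hp hg)

lemma mul_right (z : MonoidAlgebra ℕ S) (h : smonLe S a b) : smonLe S (a * z) (b * z) :=
  fun p hp hg => hp.2.2.2 a b z (h p hp hg)

lemma of_gen (h : smonGen S a b) : smonLe S a b := fun _ _ hg => hg a b h

lemma add (h₁ : smonLe S a b) (h₂ : smonLe S c d) : smonLe S (a + c) (b + d) := by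
  refine (add_right c h₁).trans ?_
  rw [add_comm b c, add_comm b d]
  exact add_right b h₂

end smonLe

namespace smonC

variable {S : Type*} [CommSemiring S] {a b c d : MonoidAlgebra ℕ S}

lemma refl (a : MonoidAlgebra ℕ S) : smonC S a a := ⟨smonLe.refl a, smonLe.refl a⟩

lemma trans (h₁ : smonC S a b) (h₂ : smonC S b c) : smonC S a c :=
  ⟨h₁.1.trans h₂.1, h₂.2.trans h₁.2⟩

lemma add (h₁ : smonC S a b) (h₂ : smonC S c d) : smonC S (a + c) (b + d) :=
  ⟨h₁.1.add h₂.1, h₁.2.add h₂.2⟩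

lemma sum {ι : Type*} (t : Finset ι) {f g : ι → MonoidAlgebra ℕ S}
    (h : ∀ i ∈ t, smonC S (f i) (g i)) : smonC S (∑ i ∈ t, f i) (∑ i ∈ t, g i) := by
  classical
  induction t using Finset.induction_on with
  | empty => simpa using refl 0
  | insert i t hi ih =>
    rw [Finset.sum_insert hi, Finset.sum_insert hi]
    exact (h i (t.mem_insert_self i)).add (ih fun j hj => h j (Finset.mem_insert_of_mem hj))

end smonC

section

variable {S : Type*} [CommSemiring S]

lemma smonC_add_self (z : MonoidAlgebra ℕ S) : smonC S (z + z) z := by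
  have h₁ := smonLe.mul_right z (smonLe.of_gen (smonGen.le_idem (S := S)))
  have h₂ := smonLe.mul_right z (smonLe.of_gen (smonGen.idem_le (S := S)))
  rw [one_mul, add_mul, one_mul] at h₁ h₂
  exact ⟨h₁, h₂⟩

lemma smonC_single_of_pos (s : S) {n : ℕ} (hn : 0 < n) :
    smonC S (single s n) (single s 1) := by
  induction n, hn using Nat.le_induction with
  | base => exact smonC.refl _
  | succ n _ ih =>
    rw [single_add]
    exact (ih.add (smonC.refl _)).trans (smonC_add_self _)

lemma smonLe_single_of_pair {a b c : S} (ha : a + b = c + b) (hb : a + b = c + a) :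
    smonLe S (single c 1) (single a 1 + single b 1) := by
  have h : ∀ k : Fin 2, ∑ i, ![a, b] i = c + ∑ i ∈ Finset.univ.erase k, ![a, b] i := by
    intro k
    fin_cases k
    · simpa [Fin.sum_univ_two, show Finset.univ.erase (0 : Fin 2) = {1} by decide] using ha
    · simpa [Fin.sum_univ_two, show Finset.univ.erase (1 : Fin 2) = {0} by decide] using hb
  simpa [Fin.sum_univ_two] using smonLe.of_gen (smonGen.rel 2 ![a, b] c h)

lemma smonLe_single_of_add_eq (hidem : ∀ x : S, x + x = x) {x y : S} (h : x + y = y) :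
    smonLe S (single x 1) (single y 1) :=
  (smonLe_single_of_pair (by rw [hidem, h]) (by rw [hidem, h])).trans (smonC_add_self _).1

lemma smonC_single_add_single (hidem : ∀ x : S, x + x = x) (a b : S) :
    smonC S (single a 1 + single b 1) (single (a + b) 1) := by
  have ha : a + (a + b) = a + b := by rw [← add_assoc, hidem]
  have hb : b + (a + b) = a + b := by rw [add_left_comm, hidem]
  refine ⟨?_, smonLe_single_of_pair (by rw [add_assoc, hidem]) (by rw [add_right_comm, hidem])⟩
  exact ((smonLe_single_of_add_eq hidem ha).add (smonLe_single_of_add_eq hidem hb)).trans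
    (smonC_add_self _).1

end

theorem stmt5_general (S : Type*) [CommSemiring S]
    (hidem : ∀ x : S, x + x = x) :
    (∀ (m : ℕ) (mult : Fin m → ℕ), (∀ i, 0 < mult i) → ∀ s : Fin m → S,
      Quot.mk (smonC S) (∑ i, MonoidAlgebra.single (s i) (mult i)) =
        Quot.mk (smonC S) (∑ i, MonoidAlgebra.single (s i) 1)) ∧
    (∀ a b : S,
      Quot.mk (smonC S) (MonoidAlgebra.single a 1 + MonoidAlgebra.single b 1) =
        Quot.mk (smonC S) (MonoidAlgebra.single (a + b) 1)) :=
  ⟨fun _ _ hpos s => Quot.sound <|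
      smonC.sum _ fun i _ => smonC_single_of_pos (s i) (hpos i),
    fun a b => Quot.sound <| smonC_single_add_single hidem a b⟩

/-- In the quotient of `ℕ[S∖{0}]` by the congruence induced by the
preorder generated by the relations `1·b ≤ Σ 1·aᵢ` (whenever `Σaᵢ = b + Σ_{i≠k}aᵢ`
in `S` for all `k`) together with `1 ≡ 1+1`, one has `[Σᵢ mᵢ·sᵢ] = [Σᵢ 1·sᵢ]` for
all positive integers `mᵢ` and `sᵢ ∈ S`, and `[1·a] + [1·b] = [1·(a+b)]` for all
`a, b ∈ S`. -/
theorem stmt5 (S : Type*) [CommSemiring S]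
    (hidem : ∀ x : S, x + x = x)
    (hinv : ∀ x : S, x ≠ 0 → ∃ y : S, x * y = 1) :
    (∀ (m : ℕ) (mult : Fin m → ℕ), (∀ i, 0 < mult i) → ∀ s : Fin m → S,
      Quot.mk (smonC S) (∑ i, MonoidAlgebra.single (s i) (mult i)) =
        Quot.mk (smonC S) (∑ i, MonoidAlgebra.single (s i) 1)) ∧
    (∀ a b : S,
      Quot.mk (smonC S) (MonoidAlgebra.single a 1 + MonoidAlgebra.single b 1) =
        Quot.mk (smonC S) (MonoidAlgebra.single (a + b) 1)) :=
  stmt5_general S hidem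
end
end

section
/- Let S be an idempotent commutative semiring. The quotient of the tensor algebra T(Sⁿ) (over the free S-semimodule Sⁿ) by the congruence generated by {eᵢ ⊗ eⱼ ≡ eⱼ ⊗ eᵢ : i, j ∈ [n]} ∪ {eᵢ ⊗ eᵢ ≡ 0 : i ∈ [n]} is a free S-semimodule with basis {e_I : I ⊆ [n]}, where e_I = e_{i₁}⋯e_{i_d} for I = {i₁ < ⋯ < i_d}; in particular it is free of rank 2ⁿ over S. -/
/-!
`eᵢ² = 0` and `eᵢeⱼ = eⱼeᵢ` give `e_I e_J = e_{I ∪ J}` for disjoint `I, J` and `0` otherwise,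
so the span of the `e_I` is a subalgebra containing the generators, hence everything.
For independence, let `eᵢ` act on the free semimodule with basis `[I]`, `I ⊆ [n]`, by
`[I] ↦ [I ∪ {i}]` if `i ∉ I` and `[I] ↦ 0` otherwise; these operators satisfy the defining
relations, and applying the resulting action of `e_I` to `[∅]` gives `[I]`.
-/

noncomputable section

open TensorAlgebra

/-- The `i`-th standard basis vector of the free semimodule `Sⁿ`. -/
def stdB (S : Type*) [CommSemiring S] (n : ℕ) (i : Fin n) : Fin n → S := Pi.single i 1

/-- The generating relations of the tropical Grassmann algebra:
`eᵢ ⊗ eⱼ ≡ eⱼ ⊗ eᵢ` and `eᵢ ⊗ eᵢ ≡ 0`. -/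
inductive tropRel (S : Type*) [CommSemiring S] (n : ℕ) :
    TensorAlgebra S (Fin n → S) → TensorAlgebra S (Fin n → S) → Prop
  | sq (i : Fin n) :
      tropRel S n (ι S (stdB S n i) * ι S (stdB S n i)) 0
  | comm (i j : Fin n) :
      tropRel S n (ι S (stdB S n i) * ι S (stdB S n j)) (ι S (stdB S n j) * ι S (stdB S n i))

/-- The tropical Grassmann algebra `Λ(Sⁿ)`: the quotient of the tensor algebra
`T(Sⁿ)` by the congruence generated by the relations `tropRel`. -/
abbrev TropGrass (S : Type*) [CommSemiring S] (n : ℕ) : Type _ :=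
  RingQuot (tropRel S n)

/-- `e_I = e_{i₁} ⋯ e_{i_d}` for `I = {i₁ < ⋯ < i_d}` (with `e_∅ = 1`). -/
def eI (S : Type*) [CommSemiring S] (n : ℕ) (I : Finset (Fin n)) : TropGrass S n :=
  ((I.sort (· ≤ ·)).map
    (fun i => RingQuot.mkAlgHom S (tropRel S n) (ι S (stdB S n i)))).prod

namespace TropGrass

section Model

variable (S : Type*) [CommSemiring S] {ι : Type*} [DecidableEq ι]

def insertOp (i : ι) : Module.End S (Finset ι →₀ S) :=
  Finsupp.lsum S fun I => if i ∈ I then 0 else Finsupp.lsingle (insert i I)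

variable {S}

theorem insertOp_single (i : ι) (I : Finset ι) (c : S) :
    insertOp S i (Finsupp.single I c) = if i ∈ I then 0 else Finsupp.single (insert i I) c := by
  simp only [insertOp, Finsupp.lsum_single]
  split_ifs <;> simp

theorem insertOp_mul_self (i : ι) : insertOp S i * insertOp S i = 0 := by
  ext I : 2
  simp only [LinearMap.comp_apply, Module.End.mul_apply, Finsupp.lsingle_apply, insertOp_single,
    LinearMap.zero_apply]
  split_ifs <;> simp [insertOp_single]

theorem insertOp_mul_comm (i j : ι) :
    insertOp S i * insertOp S j = insertOp S j * insertOp S i := by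
  ext I : 2
  simp only [LinearMap.comp_apply, Module.End.mul_apply, Finsupp.lsingle_apply]
  obtain rfl | hij := eq_or_ne i j
  · rfl
  by_cases hi : i ∈ I <;> by_cases hj : j ∈ I <;>
    simp [hi, hj, insertOp_single, hij, hij.symm, Finset.insert_comm]

theorem prod_insertOp_single_empty {l : List ι} (hl : l.Nodup) :
    (l.map (insertOp S)).prod (Finsupp.single ∅ 1) = Finsupp.single l.toFinset 1 := by
  induction l with
  | nil => simp
  | cons a t ih =>
    rw [List.nodup_cons] at hl
    simp [ih hl.2, insertOp_single, hl.1]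

end Model

variable {S : Type*} [CommSemiring S] {n : ℕ}

variable (S n) in
def gen (i : Fin n) : TropGrass S n :=
  RingQuot.mkAlgHom S (tropRel S n) (ι S (stdB S n i))

theorem gen_mul_self (i : Fin n) : gen S n i * gen S n i = 0 := by
  simpa [gen] using RingQuot.mkAlgHom_rel S (tropRel.sq (S := S) (n := n) i)

theorem commute_gen (i j : Fin n) : Commute (gen S n i) (gen S n j) := by
  simpa [gen, Commute, SemiconjBy] using RingQuot.mkAlgHom_rel S (tropRel.comm (S := S) i j)

theorem gen_mul_prod_of_mem {i : Fin n} {l : List (Fin n)} (h : i ∈ l) :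
    gen S n i * (l.map (gen S n)).prod = 0 := by
  induction l with
  | nil => simp at h
  | cons j t ih =>
    rw [List.map_cons, List.prod_cons, ← mul_assoc]
    rcases List.mem_cons.1 h with rfl | h
    · rw [gen_mul_self, zero_mul]
    · rw [(commute_gen i j).eq, mul_assoc, ih h, mul_zero]

theorem prod_gen_eq_zero_of_not_nodup {l : List (Fin n)} (h : ¬ l.Nodup) :
    (l.map (gen S n)).prod = 0 := by
  induction l with
  | nil => simp at h
  | cons i t ih =>
    rw [List.nodup_cons, not_and_or, not_not] at h
    rw [List.map_cons, List.prod_cons]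
    rcases h with h | h
    · exact gen_mul_prod_of_mem h
    · rw [ih h, mul_zero]

theorem prod_gen_perm {l₁ l₂ : List (Fin n)} (h : l₁.Perm l₂) :
    (l₁.map (gen S n)).prod = (l₂.map (gen S n)).prod :=
  (h.map _).prod_eq' <| List.pairwise_map.2 <| List.pairwise_of_forall fun i j => commute_gen i j

theorem eI_eq_prod_gen (I : Finset (Fin n)) :
    eI S n I = ((I.sort (· ≤ ·)).map (gen S n)).prod := rfl

theorem eI_empty : eI S n ∅ = 1 := by
  simp [eI]

theorem eI_singleton (i : Fin n) : eI S n {i} = gen S n i := by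
  simp [eI_eq_prod_gen]

theorem eI_mul_eI (I J : Finset (Fin n)) :
    eI S n I * eI S n J = if Disjoint I J then eI S n (I ∪ J) else 0 := by
  rw [eI_eq_prod_gen, eI_eq_prod_gen, ← List.prod_append, ← List.map_append]
  split_ifs with h
  · refine prod_gen_perm ?_
    rw [← Multiset.coe_eq_coe, ← Multiset.coe_add, Finset.sort_eq, Finset.sort_eq,
      Finset.sort_eq, ← Finset.disjUnion_eq_union I J h]
    rfl
  · refine prod_gen_eq_zero_of_not_nodup fun hnd => h <| Finset.disjoint_left.2 fun a haI haJ => ?_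
    exact List.disjoint_of_nodup_append hnd ((Finset.mem_sort _).2 haI) ((Finset.mem_sort _).2 haJ)

theorem mul_mem_span_eI {x y : TropGrass S n} (hx : x ∈ Submodule.span S (Set.range (eI S n)))
    (hy : y ∈ Submodule.span S (Set.range (eI S n))) :
    x * y ∈ Submodule.span S (Set.range (eI S n)) := by
  have hxy := Submodule.mul_mem_mul hx hy
  rw [Submodule.span_mul_span] at hxy
  refine Submodule.span_le.2 ?_ hxy
  rintro _ ⟨_, ⟨I, rfl⟩, _, ⟨J, rfl⟩, rfl⟩
  change eI S n I * eI S n J ∈ Submodule.span S _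
  rw [eI_mul_eI]
  split_ifs
  exacts [Submodule.subset_span ⟨I ∪ J, rfl⟩, Submodule.zero_mem _]

variable (S n) in
def spanEI : Subalgebra S (TropGrass S n) :=
  (Submodule.span S (Set.range (eI S n))).toSubalgebra
    (eI_empty (S := S) (n := n) ▸ Submodule.subset_span ⟨∅, rfl⟩)
    (fun _ _ => mul_mem_span_eI)

theorem mkAlgHom_ι_mem_spanEI (v : Fin n → S) :
    RingQuot.mkAlgHom S (tropRel S n) (ι S v) ∈ spanEI S n := by
  rw [← Finset.univ_sum_single v, map_sum, map_sum]
  refine Subalgebra.sum_mem _ fun i _ => ?_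
  have hi : Pi.single i (v i) = v i • stdB S n i := by
    rw [stdB, ← Pi.single_smul', smul_eq_mul, mul_one]
  have hgen : gen S n i ∈ spanEI S n := Submodule.subset_span ⟨{i}, eI_singleton i⟩
  rw [hi, map_smul, map_smul]
  exact Subalgebra.smul_mem _ hgen _

theorem span_eI_eq_top : Submodule.span S (Set.range (eI S n)) = ⊤ := by
  rw [eq_top_iff]
  rintro x -
  obtain ⟨y, rfl⟩ := RingQuot.mkAlgHom_surjective S (tropRel S n) x
  change _ ∈ spanEI S n
  induction y using TensorAlgebra.induction with
  | algebraMap r => simp only [AlgHom.commutes]; exact (spanEI S n).algebraMap_mem r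
  | ι v => exact mkAlgHom_ι_mem_spanEI v
  | mul a b ha hb => rw [map_mul]; exact mul_mem ha hb
  | add a b ha hb => rw [map_add]; exact add_mem ha hb

variable (S n) in
def toEnd : TropGrass S n →ₐ[S] Module.End S (Finset (Fin n) →₀ S) :=
  RingQuot.liftAlgHom S ⟨TensorAlgebra.lift S (Fintype.linearCombination S (insertOp S)),
    fun x y h => by
      cases h <;> simp [stdB, Fintype.linearCombination_apply_single, insertOp_mul_self,
        insertOp_mul_comm]⟩

theorem toEnd_gen (i : Fin n) : toEnd S n (gen S n i) = insertOp S i := by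
  simp [toEnd, gen, stdB, Fintype.linearCombination_apply_single]

theorem toEnd_eI_single_empty (I : Finset (Fin n)) :
    toEnd S n (eI S n I) (Finsupp.single ∅ 1) = Finsupp.single I 1 := by
  rw [eI_eq_prod_gen, map_list_prod, List.map_map, Function.comp_def]
  simp only [toEnd_gen]
  rw [prod_insertOp_single_empty (Finset.sort_nodup _ _), Finset.sort_toFinset]

theorem linearIndependent_eI : LinearIndependent S (eI S n) := by
  refine LinearIndependent.of_comp
    (LinearMap.applyₗ (Finsupp.single ∅ 1) ∘ₗ (toEnd S n).toLinearMap) ?_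
  convert Finsupp.linearIndependent_single_one S (Finset (Fin n)) using 1
  funext I
  exact toEnd_eI_single_empty I

end TropGrass

theorem stmt8_general (S : Type*) [CommSemiring S] (n : ℕ) :
    ∃ b : Module.Basis (Finset (Fin n)) S (TropGrass S n),
      ∀ I : Finset (Fin n), b I = eI S n I :=
  ⟨.mk TropGrass.linearIndependent_eI TropGrass.span_eI_eq_top.ge, Module.Basis.mk_apply _ _⟩

/-- Let `S` be an idempotent commutative semiring.  The tropical
Grassmann algebra `T(Sⁿ)/⟨eᵢ⊗eⱼ ≡ eⱼ⊗eᵢ, eᵢ⊗eᵢ ≡ 0⟩` is a free `S`-semimodule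
with basis `{e_I : I ⊆ [n]}`; in particular it is free of rank `2ⁿ`. -/
theorem stmt8 (S : Type*) [CommSemiring S] (hidem : ∀ x : S, x + x = x) (n : ℕ) :
    ∃ b : Module.Basis (Finset (Fin n)) S (TropGrass S n),
      ∀ I : Finset (Fin n), b I = eI S n I :=
  stmt8_general S n
end
end
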